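/- arXiv:2012.14302 — 2 statements merged into one kernel-verified Lean document; each statement's English description precedes it below -/
import Mathlib

section
/- Let A be a complete topological ring, B a complete topological A-algebra, (e_i)_{i∈ℕ} a restricted exponential system on B over A, and s ∈ B an element with e_1(s) = 1 and e_i(s) = 0 for all i ≥ 2. Let R_s : B → B be the Dixmier–Reynolds operator R_s(b) = ∑_{i∈ℕ} e_i(b)·(−s)^i. Then: (i) for every b ∈ B the family (R_s(e_i(b))·s^i)_{i∈ℕ} is summable in B with sum b; (ii) if (a_i)_{i∈ℕ} is a family of elements of the ring of invariants B^e converging to 0 in B with ∑_{i∈ℕ} a_i·s^i = 0, then a_i = 0 for all i. Consequently, the map B^e{S} → B sending ∑ a_i S^i to ∑ a_i s^i is an isomorphism of topological B^e-algebras from the restricted power series ring B^e{S} onto B. -/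
open Filter Topology

/-- A sequence of maps between topological additive groups *converges continuously*
to `f₀` if for every point `g` and every open subgroup `H'` of the target there exist an
open subgroup `H` of the source and an index `n₀` such that
`f n (g + x) - f₀ (g + x) ∈ H'` for every `x ∈ H` and every `n ≥ n₀`. -/
def ConvergesContinuouslyTo {G G' : Type*} [AddCommGroup G] [TopologicalSpace G]
    [AddCommGroup G'] [TopologicalSpace G'] (f : ℕ → G → G') (f₀ : G → G') : Prop :=
  ∀ g : G, ∀ H' : AddSubgroup G', IsOpen (H' : Set G') →
    ∃ H : AddSubgroup G, IsOpen (H : Set G) ∧ ∃ n₀ : ℕ,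
      ∀ x ∈ H, ∀ n, n₀ ≤ n → f n (g + x) - f₀ (g + x) ∈ H'

/-- A topological ring has a linear topology admitting a countable decreasing fundamental
system of open ideals starting with the whole ring. -/
def HasLinearRingTopology (A : Type*) [CommRing A] [TopologicalSpace A] : Prop :=
  ∃ a : ℕ → Ideal A, a 0 = ⊤ ∧ (∀ m n : ℕ, n ≤ m → a m ≤ a n) ∧
    (∀ n, IsOpen (a n : Set A)) ∧ ∀ s ∈ nhds (0 : A), ∃ n, (a n : Set A) ⊆ s

/-- A *restricted exponential system* on a topological `A`-algebra `B`
(equivalently, a topologically integrable iterated higher `A`-derivation of `B`):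
a family `(eᵢ)` of continuous `A`-module endomorphisms of `B` with `e₀ = id`,
satisfying the Leibniz rule, the iteration rule `e_j ∘ e_i = (i+j).choose i • e_{i+j}`,
and converging continuously to the zero endomorphism. -/
structure IsRestrictedExpSystem (A B : Type*) [CommRing A] [CommRing B] [Algebra A B]
    [TopologicalSpace B] (e : ℕ → B → B) : Prop where
  map_add : ∀ (i : ℕ) (b b' : B), e i (b + b') = e i b + e i b'
  map_smul : ∀ (i : ℕ) (a : A) (b : B), e i (a • b) = a • e i b
  continuous : ∀ i, Continuous (e i)
  zeroth : ∀ b, e 0 b = b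
  leibniz : ∀ (n : ℕ) (b b' : B),
    e n (b * b') = ∑ p ∈ Finset.HasAntidiagonal.antidiagonal n, e p.1 b * e p.2 b'
  comp : ∀ (i j : ℕ) (b : B), e j (e i b) = (i + j).choose i • e (i + j) b
  conv_zero : ConvergesContinuouslyTo e (fun _ => 0)

/-!
Regrouping the double series `∑ᵢ R_s(eᵢ b) sⁱ = ∑ᵢⱼ C(i+j, i) e_{i+j}(b) (-s)ʲ sⁱ` along
`i + j = n` gives the blocks `eₙ(b) (s - s)ⁿ`, so only `e₀(b) = b` survives. Conversely, for
invariant `x` we have `eₖ(x sⁱ) = C(i, k) x sⁱ⁻ᵏ` and `R_s(sᵐ) = (s - s)ᵐ`, so the continuous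
additive map `R_s ∘ eₖ` extracts the `k`-th coefficient of `∑ aᵢ sⁱ`. The Leibniz rule and the
cancellation `(1 - 1)ᵏ = 0` show that `R_s` takes values in the invariants, so
`b ↦ (R_s(eᵢ b))ᵢ` is the inverse of `θ`. Both maps are continuous because the continuous
convergence of `(eᵢ)` to zero makes the family `(eᵢ)` equicontinuous at `0`.
-/

open Finset.HasAntidiagonal

instance IsLinearTopology.nonarchimedeanRing {R : Type*} [Ring R] [TopologicalSpace R]
    [IsTopologicalRing R] [IsLinearTopology R R] : NonarchimedeanRing R where
  is_nonarchimedean U hU := by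
    obtain ⟨I, hI, hIU⟩ := IsLinearTopology.hasBasis_open_ideal.mem_iff.mp hU
    exact ⟨⟨I.toAddSubgroup, hI⟩, hIU⟩

theorem HasLinearRingTopology.isLinearTopology {R : Type*} [CommRing R] [TopologicalSpace R]
    (hR : HasLinearRingTopology R) : IsLinearTopology R R := by
  obtain ⟨a, -, -, hopen, hbasis⟩ := hR
  refine IsLinearTopology.mk_of_hasBasis R (p := fun _ : ℕ => True) (s := a)
    ⟨fun t => ⟨fun ht => ?_, ?_⟩⟩
  · obtain ⟨n, hn⟩ := hbasis t ht
    exact ⟨n, trivial, hn⟩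
  · rintro ⟨n, -, hn⟩
    exact mem_of_superset ((hopen n).mem_nhds (a n).zero_mem) hn

theorem Ideal.tsum_mem_of_isOpen {R ι : Type*} [Ring R] [TopologicalSpace R]
    [IsTopologicalRing R] {I : Ideal R} (hI : IsOpen (I : Set R)) {f : ι → R}
    (hf : ∀ i, f i ∈ I) : ∑' i, f i ∈ I :=
  tsum_mem (I.toAddSubgroup.isClosed_of_isOpen hI) hf

theorem Nat.tendsto_add_cofinite_atTop : Tendsto (fun p : ℕ × ℕ => p.1 + p.2) cofinite atTop := by
  rw [← Nat.cofinite_eq_atTop]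
  refine Tendsto.cofinite_of_finite_preimage_singleton fun n => ?_
  have : (fun p : ℕ × ℕ => p.1 + p.2) ⁻¹' {n} = antidiagonal n := by
    ext
    simp
  rw [this]
  exact (antidiagonal n).finite_toSet.to_subtype

theorem Nat.choose_mul_choose_of_add_eq {k p q : ℕ} (m : ℕ) (hpq : p + q = k) :
    (k + m).choose (m + q) * (m + q).choose q = k.choose p * (k + m).choose k := by
  rw [← Nat.choose_symm_add, Nat.choose_mul (by omega), Nat.add_sub_cancel,
    Nat.add_sub_cancel_left, Nat.choose_symm_of_eq_add hpq.symm, Nat.choose_symm_add, mul_comm]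

theorem HasSum.of_sum_antidiagonal {α M : Type*} [AddCommMonoid α] [TopologicalSpace α]
    [ContinuousAdd α] [T3Space α] [AddCommMonoid M] [Finset.HasAntidiagonal M]
    {f : M × M → α} {a : α} (hf : Summable f)
    (h : HasSum (fun n => ∑ p ∈ antidiagonal n, f p) a) : HasSum f a := by
  rw [← Finset.HasAntidiagonal.sigmaAntidiagonalEquivProd.hasSum_iff]
  refine h.sigma_of_hasSum (fun n => ?_)
    (Finset.HasAntidiagonal.sigmaAntidiagonalEquivProd.summable_iff.mpr hf)
  simpa [Finset.sum_attach] using hasSum_fintype fun p : antidiagonal n => f p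

theorem UniformFun.tendsto_nhds_iff_forall_sub_mem {ι α G : Type*} [AddGroup G] [UniformSpace G]
    [IsUniformAddGroup G] {l : Filter α} {F : α → UniformFun ι G} {f : UniformFun ι G} :
    Tendsto F l (𝓝 f) ↔
      ∀ U ∈ 𝓝 (0 : G), ∀ᶠ x in l, ∀ i, UniformFun.toFun (F x) i - UniformFun.toFun f i ∈ U := by
  rw [UniformFun.tendsto_iff_tendstoUniformly,
    IsTopologicalAddGroup.tendstoUniformly_iff _ _ _ IsUniformAddGroup.rightUniformSpace_eq]
  rfl

section RestrictedPowerSeries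

variable {B : Type*} [CommRing B] [UniformSpace B] [IsUniformAddGroup B] [IsTopologicalRing B]
  [IsLinearTopology B B] [CompleteSpace B]

theorem summable_mul_pow_of_tendsto {a : ℕ → B} (ha : Tendsto a atTop (𝓝 0)) (s : B) :
    Summable fun i => a i * s ^ i := by
  apply NonarchimedeanAddGroup.summable_of_tendsto_cofinite_zero
  rw [Nat.cofinite_eq_atTop]
  exact IsLinearTopology.tendsto_mul_zero_of_left _ _ ha

variable [T2Space B]

theorem tsum_mul_pow_mul_tsum_mul_pow {a b : ℕ → B} (ha : Tendsto a atTop (𝓝 0))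
    (hb : Tendsto b atTop (𝓝 0)) (s : B) :
    (∑' i, a i * s ^ i) * ∑' i, b i * s ^ i =
      ∑' n, (∑ p ∈ antidiagonal n, a p.1 * b p.2) * s ^ n := by
  have ha' := summable_mul_pow_of_tendsto ha s
  have hb' := summable_mul_pow_of_tendsto hb s
  have hprod := ha'.mul_of_nonarchimedean hb'
  rw [ha'.tsum_mul_tsum_eq_tsum_sum_antidiagonal hb' hprod]
  refine tsum_congr fun n => ?_
  rw [Finset.sum_mul]
  refine Finset.sum_congr rfl fun p hp => ?_
  rw [← mem_antidiagonal.mp hp, pow_add]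
  ring

theorem continuousOn_tsum_mul_pow (s : B) :
    ContinuousOn (fun a : UniformFun ℕ B => ∑' i, UniformFun.toFun a i * s ^ i)
      {a | Tendsto (UniformFun.toFun a) atTop (𝓝 0)} := by
  intro a ha
  rw [ContinuousWithinAt, ← tendsto_sub_nhds_zero_iff,
    IsLinearTopology.hasBasis_open_ideal.tendsto_right_iff]
  intro I hI
  have hclose := UniformFun.tendsto_nhds_iff_forall_sub_mem.mp (tendsto_id (x := 𝓝 a)) _
    (hI.mem_nhds I.zero_mem)
  filter_upwards [self_mem_nhdsWithin, nhdsWithin_le_nhds hclose] with a' ha' hdiff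
  rw [← (summable_mul_pow_of_tendsto ha' s).tsum_sub (summable_mul_pow_of_tendsto ha s)]
  exact Ideal.tsum_mem_of_isOpen hI fun i => by
    rw [← sub_mul]
    exact I.mul_mem_right _ (hdiff i)

end RestrictedPowerSeries

noncomputable def reynolds {B : Type*} [CommRing B] [TopologicalSpace B] (e : ℕ → B → B)
    (s c : B) : B :=
  ∑' j, e j c * (-s) ^ j

theorem reynolds_mem {B : Type*} [CommRing B] [TopologicalSpace B] [IsTopologicalRing B]
    {e : ℕ → B → B} (s : B) {I : Ideal B} (hI : IsOpen (I : Set B)) {c : B}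
    (hc : ∀ m, e m c ∈ I) : reynolds e s c ∈ I :=
  Ideal.tsum_mem_of_isOpen hI fun j => I.mul_mem_right _ (hc j)

namespace IsRestrictedExpSystem

section Algebraic

variable {A B : Type*} [CommRing A] [CommRing B] [Algebra A B] [TopologicalSpace B]
  {e : ℕ → B → B}

def addMonoidHom (he : IsRestrictedExpSystem A B e) (i : ℕ) : B →+ B :=
  AddMonoidHom.mk' (e i) (he.map_add i)

theorem apply_zero (he : IsRestrictedExpSystem A B e) (i : ℕ) : e i 0 = 0 :=
  (he.addMonoidHom i).map_zero

theorem apply_neg (he : IsRestrictedExpSystem A B e) (i : ℕ) (x : B) : e i (-x) = -e i x :=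
  (he.addMonoidHom i).map_neg x

theorem apply_one (he : IsRestrictedExpSystem A B e) {j : ℕ} (hj : 1 ≤ j) : e j 1 = 0 := by
  induction j using Nat.strong_induction_on with
  | _ j ih =>
    have h := he.leibniz j 1 1
    rw [mul_one, Finset.sum_eq_add_of_mem (0, j) (j, 0) (by simp) (by simp) (by simp; omega)]
      at h
    · simpa [he.zeroth] using h
    · rintro ⟨p, q⟩ hpq hne
      rw [mem_antidiagonal] at hpq
      simp only [ne_eq, Prod.mk.injEq, not_and] at hne
      rw [ih p (by omega) (by omega), zero_mul]

theorem apply_mul_of_invariant (he : IsRestrictedExpSystem A B e) {x : B}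
    (hx : ∀ q, 1 ≤ q → e q x = 0) (y : B) (j : ℕ) : e j (x * y) = x * e j y := by
  rw [he.leibniz, Finset.sum_eq_single (0, j) _ (by simp), he.zeroth]
  rintro ⟨p, q⟩ hpq hne
  rw [mem_antidiagonal] at hpq
  rw [hx p (by contrapose! hne; simp_all), zero_mul]

theorem apply_mul_of_degree_le_one (he : IsRestrictedExpSystem A B e) {t u : B}
    (ht1 : e 1 t = u) (ht2 : ∀ i, 2 ≤ i → e i t = 0) (x : B) {j : ℕ} (hj : 1 ≤ j) :
    e j (x * t) = e j x * t + e (j - 1) x * u := by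
  rw [he.leibniz, Finset.sum_eq_add_of_mem (j, 0) (j - 1, 1) (by simp) (by simp; omega)
    (by simp), he.zeroth, ht1]
  rintro ⟨p, q⟩ hpq hne
  rw [mem_antidiagonal] at hpq
  simp only [ne_eq, Prod.mk.injEq, not_and] at hne
  rw [ht2 q (by omega), mul_zero]

theorem apply_pow_of_degree_le_one (he : IsRestrictedExpSystem A B e) {t u : B}
    (ht1 : e 1 t = u) (ht2 : ∀ i, 2 ≤ i → e i t = 0) (i j : ℕ) :
    e j (t ^ i) = i.choose j • (u ^ j * t ^ (i - j)) := by
  induction i generalizing j with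
  | zero =>
    rcases j with _ | j
    · simp [he.zeroth]
    · simp [he.apply_one]
  | succ i ih =>
    rcases j with _ | j
    · simp [he.zeroth]
    rw [pow_succ, he.apply_mul_of_degree_le_one ht1 ht2 _ (by omega), Nat.add_sub_cancel, ih,
      ih, Nat.choose_succ_succ', add_smul, add_comm, Nat.succ_sub_succ]
    congr 1
    · rw [smul_mul_assoc, pow_succ]
      ring
    rcases le_or_gt (j + 1) i with h | h
    · rw [smul_mul_assoc, show i - j = i - (j + 1) + 1 by omega]
      ring
    · rw [Nat.choose_eq_zero_of_lt h, zero_smul, zero_mul, zero_smul]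

theorem eventually_forall_apply_mem (he : IsRestrictedExpSystem A B e) {I : Ideal B}
    (hI : IsOpen (I : Set B)) : ∀ᶠ d in 𝓝 0, ∀ m, e m d ∈ I := by
  obtain ⟨H, hH, n₀, hconv⟩ := he.conv_zero 0 I.toAddSubgroup hI
  have hsmall : ∀ᶠ d in 𝓝 (0 : B), ∀ m ∈ Set.Iio n₀, e m d ∈ I :=
    (eventually_all_finite (Set.finite_Iio n₀)).mpr fun m _ =>
      ((he.continuous m).tendsto' 0 0 (he.apply_zero m)).eventually (hI.mem_nhds I.zero_mem)
  filter_upwards [hH.mem_nhds H.zero_mem, hsmall] with d hdH hd m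
  rcases lt_or_ge m n₀ with hm | hm
  · exact hd m hm
  · simpa using hconv d hdH m hm

theorem reynolds_zero (he : IsRestrictedExpSystem A B e) (s : B) : reynolds e s 0 = 0 := by
  simp [reynolds, he.apply_zero]

theorem reynolds_pow_slice (he : IsRestrictedExpSystem A B e) {s : B} (hs1 : e 1 s = 1)
    (hs2 : ∀ i, 2 ≤ i → e i s = 0) (i : ℕ) : reynolds e s (s ^ i) = 0 ^ i := by
  rw [reynolds, tsum_eq_sum (s := Finset.range (i + 1)) fun j hj => by
    rw [he.apply_pow_of_degree_le_one hs1 hs2, Nat.choose_eq_zero_of_lt (by simpa using hj),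
      zero_smul, zero_mul], ← neg_add_cancel s, add_pow]
  refine Finset.sum_congr rfl fun j _ => ?_
  rw [he.apply_pow_of_degree_le_one hs1 hs2, one_pow, one_mul, nsmul_eq_mul]
  ring

end Algebraic

section LinearTopology

variable {A B : Type*} [CommRing A] [CommRing B] [Algebra A B] [TopologicalSpace B]
  [IsTopologicalRing B] {e : ℕ → B → B}

theorem reynolds_apply_mem (he : IsRestrictedExpSystem A B e) {s : B} {I : Ideal B}
    (hI : IsOpen (I : Set B)) {d : B} {i : ℕ} (hd : ∀ m, i ≤ m → e m d ∈ I) :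
    reynolds e s (e i d) ∈ I :=
  reynolds_mem s hI fun m => by
    rw [he.comp, nsmul_eq_mul]
    exact I.mul_mem_left _ (hd _ (by omega))

variable [IsLinearTopology B B]

theorem tendsto_apply_atTop (he : IsRestrictedExpSystem A B e) (b : B) :
    Tendsto (fun m => e m b) atTop (𝓝 0) := by
  rw [IsLinearTopology.hasBasis_open_ideal.tendsto_right_iff]
  intro I hI
  obtain ⟨H, -, n₀, hconv⟩ := he.conv_zero b I.toAddSubgroup hI
  filter_upwards [eventually_ge_atTop n₀] with m hm
  simpa using hconv 0 H.zero_mem m hm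

theorem tendsto_reynolds_apply (he : IsRestrictedExpSystem A B e) (s b : B) :
    Tendsto (fun i => reynolds e s (e i b)) atTop (𝓝 0) := by
  rw [IsLinearTopology.hasBasis_open_ideal.tendsto_right_iff]
  intro I hI
  obtain ⟨N, hN⟩ := eventually_atTop.mp
    ((he.tendsto_apply_atTop b).eventually (hI.mem_nhds I.zero_mem))
  filter_upwards [eventually_ge_atTop N] with i hi
  exact he.reynolds_apply_mem hI fun m hm => hN m (by omega)

end LinearTopology

section Complete

variable {A B : Type*} [CommRing A] [CommRing B] [Algebra A B] [UniformSpace B]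
  [IsUniformAddGroup B] [IsTopologicalRing B] [IsLinearTopology B B] [CompleteSpace B]
  {e : ℕ → B → B}

theorem summable_reynolds (he : IsRestrictedExpSystem A B e) (s c : B) :
    Summable fun j => e j c * (-s) ^ j := by
  apply NonarchimedeanAddGroup.summable_of_tendsto_cofinite_zero
  rw [Nat.cofinite_eq_atTop]
  exact IsLinearTopology.tendsto_mul_zero_of_left _ _ (he.tendsto_apply_atTop c)

variable [T2Space B]

theorem reynolds_add (he : IsRestrictedExpSystem A B e) (s x y : B) :
    reynolds e s (x + y) = reynolds e s x + reynolds e s y := by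
  simp only [reynolds, he.map_add, add_mul]
  exact (he.summable_reynolds s x).tsum_add (he.summable_reynolds s y)

noncomputable def reynoldsAddMonoidHom (he : IsRestrictedExpSystem A B e) (s : B) : B →+ B :=
  AddMonoidHom.mk' (reynolds e s) (he.reynolds_add s)

theorem reynolds_nsmul (he : IsRestrictedExpSystem A B e) (s : B) (n : ℕ) (x : B) :
    reynolds e s (n • x) = n • reynolds e s x :=
  (he.reynoldsAddMonoidHom s).map_nsmul n x

theorem continuous_reynolds (he : IsRestrictedExpSystem A B e) (s : B) :
    Continuous (reynolds e s) := by
  refine continuous_of_continuousAt_zero (he.reynoldsAddMonoidHom s) ?_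
  rw [ContinuousAt, map_zero, IsLinearTopology.hasBasis_open_ideal.tendsto_right_iff]
  intro I hI
  filter_upwards [he.eventually_forall_apply_mem hI] with d hd using reynolds_mem s hI hd

theorem reynolds_mul_of_invariant (he : IsRestrictedExpSystem A B e) (s : B) {x : B}
    (hx : ∀ q, 1 ≤ q → e q x = 0) (y : B) : reynolds e s (x * y) = x * reynolds e s y := by
  simp only [reynolds, he.apply_mul_of_invariant hx, mul_assoc]
  exact (he.summable_reynolds s y).tsum_mul_left x

theorem apply_reynolds_eq_zero (he : IsRestrictedExpSystem A B e) {s : B} (hs1 : e 1 s = 1)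
    (hs2 : ∀ i, 2 ≤ i → e i s = 0) (c : B) {k : ℕ} (hk : 1 ≤ k) :
    e k (reynolds e s c) = 0 := by
  have hneg1 : e 1 (-s) = -1 := by rw [he.apply_neg, hs1]
  have hneg2 : ∀ i, 2 ≤ i → e i (-s) = 0 := fun i hi => by rw [he.apply_neg, hs2 i hi, neg_zero]
  have hR : HasSum (fun j => e k (e j c * (-s) ^ j)) (e k (reynolds e s c)) :=
    (he.summable_reynolds s c).hasSum.map (he.addMonoidHom k) (he.continuous k)
  -- After the shift `j = m + q`, the `(p, q)` Leibniz component is `C(k, p) (-1)^q` times the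
  -- series of `reynolds e s (e k c)`, and these coefficients add up to `(1 - 1)^k = 0`.
  have hpart : ∀ pq ∈ antidiagonal k, HasSum (fun j => e pq.1 (e j c) * e pq.2 ((-s) ^ j))
      (k.choose pq.1 • (1 ^ pq.1 * (-1) ^ pq.2) * reynolds e s (e k c)) := by
    rintro ⟨p, q⟩ hpq
    rw [mem_antidiagonal] at hpq
    dsimp only at hpq ⊢
    rw [← hasSum_nat_add_iff' q, Finset.sum_eq_zero fun j hj => by
      rw [he.apply_pow_of_degree_le_one hneg1 hneg2,
        Nat.choose_eq_zero_of_lt (by simpa using hj), zero_smul, mul_zero], sub_zero]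
    refine ((he.summable_reynolds s (e k c)).hasSum.mul_left _).congr_fun fun m => ?_
    rw [he.comp, he.comp, he.apply_pow_of_degree_le_one hneg1 hneg2,
      show m + q + p = k + m by omega, show m + q - q = m by omega]
    have hcast := congrArg (Nat.cast : ℕ → B) (Nat.choose_mul_choose_of_add_eq m hpq)
    push_cast at hcast
    simp only [nsmul_eq_mul, one_pow, one_mul]
    linear_combination ((-1) ^ q * e (k + m) c * (-s) ^ m) * hcast
  have hsum := hasSum_sum hpart
  rw [← Finset.sum_mul, ← Commute.add_pow' (Commute.one_left _), add_neg_cancel,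
    zero_pow (by omega), zero_mul] at hsum
  refine hR.unique (hsum.congr_fun fun j => ?_)
  rw [he.leibniz]

theorem continuous_reynolds_apply (he : IsRestrictedExpSystem A B e) (s : B) :
    Continuous fun b => UniformFun.ofFun fun i => reynolds e s (e i b) := by
  let F : B →+ UniformFun ℕ B :=
    { toFun := fun b => UniformFun.ofFun fun i => reynolds e s (e i b)
      map_zero' := by simp only [he.apply_zero, he.reynolds_zero]; rfl
      map_add' := fun x y => by simp only [he.map_add, he.reynolds_add]; rfl }
  refine continuous_of_continuousAt_zero F ?_
  rw [ContinuousAt, map_zero, UniformFun.tendsto_nhds_iff_forall_sub_mem]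
  intro U hU
  obtain ⟨I, hI, hIU⟩ := IsLinearTopology.hasBasis_open_ideal.mem_iff.mp hU
  filter_upwards [he.eventually_forall_apply_mem hI] with d hd i
  exact hIU (by simpa [F] using he.reynolds_apply_mem hI fun m _ => hd m)

theorem hasSum_reynolds_apply_mul_pow (he : IsRestrictedExpSystem A B e) (s b : B) :
    HasSum (fun i => reynolds e s (e i b) * s ^ i) b := by
  let t : ℕ × ℕ → B := fun p => e p.2 (e p.1 b) * (-s) ^ p.2 * s ^ p.1
  have ht : ∀ p, t p = (p.1 + p.2).choose p.1 * (e (p.1 + p.2) b * ((-s) ^ p.2 * s ^ p.1)) :=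
    fun p => by simp only [t, he.comp, nsmul_eq_mul, mul_assoc]
  have hsummable : Summable t := by
    apply NonarchimedeanAddGroup.summable_of_tendsto_cofinite_zero
    rw [tendsto_congr ht]
    exact IsLinearTopology.tendsto_mul_zero_of_right _ _ (IsLinearTopology.tendsto_mul_zero_of_left
      _ _ ((he.tendsto_apply_atTop b).comp Nat.tendsto_add_cofinite_atTop))
  have hdiag : ∀ n, ∑ p ∈ antidiagonal n, t p = e n b * (s + -s) ^ n := by
    intro n
    rw [(Commute.all s (-s)).add_pow', Finset.mul_sum]
    refine Finset.sum_congr rfl fun p hp => ?_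
    rw [ht, mem_antidiagonal.mp hp, nsmul_eq_mul]
    ring
  have htotal : HasSum t b := by
    refine HasSum.of_sum_antidiagonal hsummable ?_
    simp_rw [hdiag, add_neg_cancel]
    convert hasSum_ite_eq 0 b with n
    rcases n with _ | n <;> simp [he.zeroth]
  exact htotal.prod_fiberwise fun i => (he.summable_reynolds s (e i b)).hasSum.mul_right (s ^ i)

theorem reynolds_apply_mul_pow (he : IsRestrictedExpSystem A B e) {s : B} (hs1 : e 1 s = 1)
    (hs2 : ∀ i, 2 ≤ i → e i s = 0) {x : B} (hx : ∀ q, 1 ≤ q → e q x = 0) (i k : ℕ) :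
    reynolds e s (e k (x * s ^ i)) = if i = k then x else 0 := by
  rw [he.apply_mul_of_invariant hx, he.apply_pow_of_degree_le_one hs1 hs2, one_pow, one_mul,
    he.reynolds_mul_of_invariant s hx, he.reynolds_nsmul, he.reynolds_pow_slice hs1 hs2]
  rcases lt_trichotomy i k with h | rfl | h
  · simp [Nat.choose_eq_zero_of_lt h, h.ne]
  · simp
  · simp [h.ne', zero_pow (Nat.sub_ne_zero_of_lt h)]

theorem eq_reynolds_apply_of_hasSum (he : IsRestrictedExpSystem A B e) {s : B}
    (hs1 : e 1 s = 1) (hs2 : ∀ i, 2 ≤ i → e i s = 0) {a : ℕ → B}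
    (ha : ∀ i j, 1 ≤ j → e j (a i) = 0) {b : B} (hb : HasSum (fun i => a i * s ^ i) b)
    (k : ℕ) : a k = reynolds e s (e k b) := by
  have hmap := hb.map ((he.reynoldsAddMonoidHom s).comp (he.addMonoidHom k))
    ((he.continuous_reynolds s).comp (he.continuous k))
  change HasSum (fun i => reynolds e s (e k (a i * s ^ i))) (reynolds e s (e k b)) at hmap
  simp_rw [he.reynolds_apply_mul_pow hs1 hs2 (ha _)] at hmap
  have hsingle := hasSum_single (f := fun i => if i = k then a i else 0) k fun i hi => if_neg hi
  simpa using hsingle.unique hmap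

end Complete

end IsRestrictedExpSystem

theorem slice_gives_restricted_polynomial_ring_general
    (A B : Type*) [CommRing A]
    [CommRing B] [Algebra A B] [UniformSpace B] [IsUniformAddGroup B] [IsTopologicalRing B]
    [CompleteSpace B] [T2Space B]
    (hB : HasLinearRingTopology B)
    (e : ℕ → B → B) (he : IsRestrictedExpSystem A B e)
    (s : B) (hs1 : e 1 s = 1) (hs2 : ∀ i, 2 ≤ i → e i s = 0) :
    let RS := {a : UniformFun ℕ B // (∀ i j : ℕ, 1 ≤ j → e j (UniformFun.toFun a i) = 0) ∧
      Tendsto (UniformFun.toFun a) atTop (nhds 0)}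
    let θ : RS → B := fun a => ∑' i, UniformFun.toFun a.1 i * s ^ i
    (∀ b : B, HasSum (fun i => (∑' j, e j (e i b) * (-s) ^ j) * s ^ i) b) ∧
      (∀ a : ℕ → B, (∀ i j : ℕ, 1 ≤ j → e j (a i) = 0) → Tendsto a atTop (nhds 0) →
        HasSum (fun i => a i * s ^ i) 0 → ∀ i, a i = 0) ∧
      Function.Bijective θ ∧ Continuous θ ∧ IsOpenMap θ ∧
      (∀ a b : RS, θ a + θ b =
        ∑' n, (UniformFun.toFun a.1 n + UniformFun.toFun b.1 n) * s ^ n) ∧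
      (∀ a b : RS, θ a * θ b =
        ∑' n, (∑ p ∈ Finset.HasAntidiagonal.antidiagonal n,
          UniformFun.toFun a.1 p.1 * UniformFun.toFun b.1 p.2) * s ^ n) ∧
      (∀ c : B, (∀ j, 1 ≤ j → e j c = 0) → ∀ a : RS,
        c * θ a = ∑' n, (c * UniformFun.toFun a.1 n) * s ^ n) := by
  have := hB.isLinearTopology
  intro RS θ
  have hθ (a : RS) : HasSum (fun i => UniformFun.toFun a.1 i * s ^ i) (θ a) :=
    (summable_mul_pow_of_tendsto a.2.2 s).hasSum
  let σ (b : B) : RS := ⟨UniformFun.ofFun fun i => reynolds e s (e i b),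
    fun _ _ hj => he.apply_reynolds_eq_zero hs1 hs2 _ hj, he.tendsto_reynolds_apply s b⟩
  let h : RS ≃ₜ B :=
    { toFun := θ
      invFun := σ
      left_inv := fun a => Subtype.ext <| funext fun i =>
        (he.eq_reynolds_apply_of_hasSum hs1 hs2 a.2.1 (hθ a) i).symm
      right_inv := fun b => (he.hasSum_reynolds_apply_mul_pow s b).tsum_eq
      continuous_toFun :=
        (continuousOn_tsum_mul_pow s).comp_continuous continuous_subtype_val fun a => a.2.2
      continuous_invFun := (he.continuous_reynolds_apply s).subtype_mk _ }
  refine ⟨he.hasSum_reynolds_apply_mul_pow s, fun a ha _ h0 i => ?_, h.bijective, h.continuous,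
    h.isOpenMap, fun a b => ?_, fun a b => tsum_mul_pow_mul_tsum_mul_pow a.2.2 b.2.2 s,
    fun c _ a => ?_⟩
  · simpa [he.apply_zero, he.reynolds_zero] using he.eq_reynolds_apply_of_hasSum hs1 hs2 ha h0 i
  · simpa only [add_mul] using ((hθ a).add (hθ b)).tsum_eq.symm
  · simpa only [mul_assoc] using ((hθ a).mul_left c).tsum_eq.symm

/-- given a restricted exponential system `(eᵢ)` on `B` with a slice `s`
(`e₁(s) = 1`, `eᵢ(s) = 0` for `i ≥ 2`), with Dixmier–Reynolds operator
`R_s(b) = ∑ᵢ eᵢ(b)·(-s)ⁱ`: (i) for every `b` the family `(R_s(eᵢ(b))·sⁱ)` is summable with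
sum `b`; (ii) an invariant coefficient family tending to `0` with `∑ aᵢ sⁱ = 0` vanishes;
consequently the evaluation map `θ : B^e{S} → B`, `∑ aᵢ Sⁱ ↦ ∑ aᵢ sⁱ`, defined on the
ring `B^e{S}` of restricted power series (invariant coefficient families tending to `0`,
with the topology induced by uniform convergence) is an isomorphism of topological
`B^e`-algebras: bijective, continuous, open, additive, multiplicative for the Cauchy
product, and `B^e`-linear. -/
theorem slice_gives_restricted_polynomial_ring
    (A B : Type*) [CommRing A] [UniformSpace A] [IsUniformAddGroup A] [IsTopologicalRing A]
    [CompleteSpace A] [T2Space A]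
    [CommRing B] [Algebra A B] [UniformSpace B] [IsUniformAddGroup B] [IsTopologicalRing B]
    [CompleteSpace B] [T2Space B]
    (hA : HasLinearRingTopology A) (hB : HasLinearRingTopology B)
    (halg : Continuous (algebraMap A B))
    (e : ℕ → B → B) (he : IsRestrictedExpSystem A B e)
    (s : B) (hs1 : e 1 s = 1) (hs2 : ∀ i, 2 ≤ i → e i s = 0) :
    let RS := {a : UniformFun ℕ B // (∀ i j : ℕ, 1 ≤ j → e j (UniformFun.toFun a i) = 0) ∧
      Tendsto (UniformFun.toFun a) atTop (nhds 0)}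
    let θ : RS → B := fun a => ∑' i, UniformFun.toFun a.1 i * s ^ i
    (∀ b : B, HasSum (fun i => (∑' j, e j (e i b) * (-s) ^ j) * s ^ i) b) ∧
      (∀ a : ℕ → B, (∀ i j : ℕ, 1 ≤ j → e j (a i) = 0) → Tendsto a atTop (nhds 0) →
        HasSum (fun i => a i * s ^ i) 0 → ∀ i, a i = 0) ∧
      Function.Bijective θ ∧ Continuous θ ∧ IsOpenMap θ ∧
      (∀ a b : RS, θ a + θ b =
        ∑' n, (UniformFun.toFun a.1 n + UniformFun.toFun b.1 n) * s ^ n) ∧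
      (∀ a b : RS, θ a * θ b =
        ∑' n, (∑ p ∈ Finset.HasAntidiagonal.antidiagonal n,
          UniformFun.toFun a.1 p.1 * UniformFun.toFun b.1 p.2) * s ^ n) ∧
      (∀ c : B, (∀ j, 1 ≤ j → e j c = 0) → ∀ a : RS,
        c * θ a = ∑' n, (c * UniformFun.toFun a.1 n) * s ^ n) :=
  slice_gives_restricted_polynomial_ring_general A B hB e he s hs1 hs2
end

section
/- Let A be a topological ring, let B be a Hausdorff topological ring with separated completion c : B → B̂, and let h_n : A → B (n ∈ ℕ) be additive group homomorphisms such that for every a ∈ A the sequence (h_n(a))_{n∈ℕ} converges to 0 in B. Then the map s : A → B̂{T} defined by s(a) = ∑_{n∈ℕ} c(h_n(a))·Tⁿ is a well-defined additive group homomorphism, and s is continuous if and only if every h_n is continuous and the sequence (h_n) converges continuously to the zero homomorphism. -/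
open Filter Topology

/-- A sequence of maps between topological additive groups *converges pointwise* to `f₀`. -/
def ConvergesPointwiseTo {G G' : Type*} [AddCommGroup G] [TopologicalSpace G]
    [AddCommGroup G'] [TopologicalSpace G'] (f : ℕ → G → G') (f₀ : G → G') : Prop :=
  ∀ g : G, ∀ H' : AddSubgroup G', IsOpen (H' : Set G') →
    ∃ n₀ : ℕ, ∀ n, n₀ ≤ n → f n g - f₀ g ∈ H'

/-- A topological abelian group has a linear topology admitting a countable decreasing
fundamental system of open subgroups starting with the whole group. -/
def HasLinearGroupTopology (G : Type*) [AddCommGroup G] [TopologicalSpace G] : Prop :=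
  ∃ H : ℕ → AddSubgroup G, H 0 = ⊤ ∧ (∀ m n : ℕ, n ≤ m → H m ≤ H n) ∧
    (∀ n, IsOpen (H n : Set G)) ∧ ∀ s ∈ nhds (0 : G), ∃ n, (H n : Set G) ⊆ s

/-!
The map `a ↦ (c (hₙ a))ₙ` into `ℕ → B̂` with the topology of uniform convergence is continuous
exactly when the family `(hₙ)` is equicontinuous, and since `c` is a uniform embedding the
completion plays no role. For additive maps equicontinuity reduces to equicontinuity at `0`:
every open subgroup `W` of `B` contains `hₙ(U)` for a single neighbourhood `U` of `0` and all `n`.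
This splits into continuity of the finitely many first `hₙ` and continuous convergence of the tail
at `0`; open subgroups of `A` together with pointwise convergence spread the latter to every point.
-/

theorem HasLinearRingTopology.hasLinearGroupTopology {A : Type*} [CommRing A] [TopologicalSpace A]
    (hA : HasLinearRingTopology A) : HasLinearGroupTopology A := by
  obtain ⟨𝔞, h0, hanti, hopen, hbasis⟩ := hA
  exact ⟨fun n => (𝔞 n).toAddSubgroup, by simp [h0], fun m n hnm => hanti m n hnm, hopen, hbasis⟩

theorem HasLinearGroupTopology.nonarchimedeanAddGroup {G : Type*} [AddCommGroup G]
    [TopologicalSpace G] [IsTopologicalAddGroup G] (hG : HasLinearGroupTopology G) :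
    NonarchimedeanAddGroup G where
  is_nonarchimedean U hU := by
    obtain ⟨H, -, -, hopen, hbasis⟩ := hG
    obtain ⟨n, hn⟩ := hbasis U hU
    exact ⟨⟨H n, hopen n⟩, hn⟩

section

variable {ι G B : Type*} [AddGroup G] [TopologicalSpace G]
  [AddGroup B] [UniformSpace B] [IsUniformAddGroup B]

theorem equicontinuousAt_zero_iff_eventually_forall_mem (f : ι → G →+ B) :
    EquicontinuousAt (fun i => ⇑(f i)) 0 ↔ ∀ V ∈ 𝓝 (0 : B), ∀ᶠ x in 𝓝 0, ∀ i, f i x ∈ V := by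
  simp [(𝓝 (0 : B)).basis_sets.uniformity_of_nhds_zero.equicontinuousAt_iff_right]

end

section

variable {G B : Type*} [AddCommGroup G] [TopologicalSpace G]
  [AddCommGroup B] [UniformSpace B] [IsUniformAddGroup B]

theorem EquicontinuousAt.convergesContinuouslyTo_zero [NonarchimedeanAddGroup G]
    {f : ℕ → G →+ B} (hf : EquicontinuousAt (fun n => ⇑(f n)) 0)
    (hpt : ∀ g, Tendsto (fun n => f n g) atTop (𝓝 0)) :
    ConvergesContinuouslyTo (fun n g => f n g) (fun _ => 0) := by
  intro g H' hH'
  have hH'0 : (H' : Set B) ∈ 𝓝 0 := hH'.mem_nhds H'.zero_mem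
  obtain ⟨U, hU⟩ := NonarchimedeanAddGroup.is_nonarchimedean _
    ((equicontinuousAt_zero_iff_eventually_forall_mem f).1 hf _ hH'0)
  obtain ⟨n₀, hn₀⟩ := eventually_atTop.1 ((hpt g).eventually hH'0)
  refine ⟨U.toAddSubgroup, U.isOpen, n₀, fun x hx n hn => ?_⟩
  simpa using H'.add_mem (hn₀ n hn) (hU hx n)

theorem ConvergesContinuouslyTo.equicontinuousAt_zero [NonarchimedeanAddGroup B]
    {f : ℕ → G →+ B} (hcont : ∀ n, Continuous (f n))
    (hf : ConvergesContinuouslyTo (fun n g => f n g) (fun _ => 0)) :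
    EquicontinuousAt (fun n => ⇑(f n)) 0 := by
  refine (equicontinuousAt_zero_iff_eventually_forall_mem f).2 fun V hV => ?_
  obtain ⟨W, hW⟩ := NonarchimedeanAddGroup.is_nonarchimedean V hV
  obtain ⟨H, hH, n₀, hn₀⟩ := hf 0 W.toAddSubgroup W.isOpen
  have hhead : ∀ᶠ x in 𝓝 (0 : G), ∀ n ∈ Finset.range n₀, f n x ∈ W := by
    rw [eventually_all_finset]
    exact fun n _ => (hcont n).continuousAt.preimage_mem_nhds (by simpa using W.mem_nhds_zero)
  filter_upwards [hhead, hH.mem_nhds H.zero_mem] with x hxhead hxH n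
  rcases lt_or_ge n n₀ with hn | hn
  · exact hW (hxhead n (Finset.mem_range.2 hn))
  · exact hW (by simpa using hn₀ x hxH n hn)

theorem equicontinuousAt_zero_iff_continuous_and_convergesContinuouslyTo_zero
    [NonarchimedeanAddGroup G] [NonarchimedeanAddGroup B] {f : ℕ → G →+ B}
    (hpt : ∀ g, Tendsto (fun n => f n g) atTop (𝓝 0)) :
    EquicontinuousAt (fun n => ⇑(f n)) 0 ↔
      (∀ n, Continuous (f n)) ∧ ConvergesContinuouslyTo (fun n g => f n g) (fun _ => 0) :=
  ⟨fun hf => ⟨fun n => (equicontinuous_of_equicontinuousAt_zero f hf).continuous n,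
      hf.convergesContinuouslyTo_zero hpt⟩,
    fun hf => hf.2.equicontinuousAt_zero hf.1⟩

end

open UniformSpace in
/-- The restricted power series `s(a) ∈ B̂{T}` is encoded by its coefficient family in `ℕ →ᵤ B̂`:
on series with coefficients tending to `0`, uniform convergence of coefficients is the topology
of `B̂{T}`. -/
theorem restricted_series_map_continuous_iff_general
    (A B : Type*) [CommRing A] [TopologicalSpace A] [IsTopologicalRing A]
    [CommRing B] [UniformSpace B] [IsUniformAddGroup B] [T2Space B]
    (hA : HasLinearRingTopology A) (hB : HasLinearRingTopology B)
    (h : ℕ → A →+ B)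
    (hpt : ∀ a : A, Tendsto (fun n => h n a) atTop (nhds 0)) :
    (∀ a : A, Tendsto (fun n => ((h n a : B) : Completion B)) atTop (nhds 0)) ∧
      (∀ a a' : A,
        (UniformFun.ofFun fun n => ((h n (a + a') : B) : Completion B)) =
          (UniformFun.ofFun fun n => ((h n a : B) : Completion B)) +
            UniformFun.ofFun fun n => ((h n a' : B) : Completion B)) ∧
      (Continuous (fun a : A =>
          UniformFun.ofFun fun n => ((h n a : B) : Completion B)) ↔
        ((∀ n, Continuous (h n)) ∧
          ConvergesContinuouslyTo (fun n a => h n a) (fun _ => 0))) := by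
  have := hA.hasLinearGroupTopology.nonarchimedeanAddGroup
  have := hB.hasLinearGroupTopology.nonarchimedeanAddGroup
  refine ⟨fun a => ?_, fun a a' => ?_, ?_⟩
  · exact ((Completion.continuous_coe B).tendsto' 0 0 Completion.coe_zero).comp (hpt a)
  · exact funext fun n => (congrArg _ (map_add (h n) a a')).trans (Completion.coe_add _ _)
  calc Continuous (fun a : A => UniformFun.ofFun fun n => ((h n a : B) : Completion B))
      ↔ Equicontinuous (fun n a => ((h n a : B) : Completion B)) :=
        equicontinuous_iff_continuous.symm
    _ ↔ Equicontinuous (fun n => ⇑(h n)) :=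
        (Completion.isUniformEmbedding_coe B).isUniformInducing.equicontinuous_iff.symm
    _ ↔ EquicontinuousAt (fun n => ⇑(h n)) 0 :=
        ⟨fun hf => hf 0, equicontinuous_of_equicontinuousAt_zero h⟩
    _ ↔ _ := equicontinuousAt_zero_iff_continuous_and_convergesContinuouslyTo_zero hpt

open UniformSpace in
/-- given additive homomorphisms `hₙ : A → B` whose values at each point
tend to `0`, the map `s : A → B̂{T}`, `s(a) = ∑ₙ c(hₙ(a))·Tⁿ` (encoded by its coefficient
family, landing in the restricted power series, i.e. in the functions `ℕ → B̂` with
coefficients tending to `0`, with the topology of uniform convergence) is a well-defined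
additive homomorphism, and it is continuous iff each `hₙ` is continuous and the sequence
`(hₙ)` converges continuously to the zero homomorphism. -/
theorem restricted_series_map_continuous_iff
    (A B : Type*) [CommRing A] [TopologicalSpace A] [IsTopologicalRing A]
    [CommRing B] [UniformSpace B] [IsUniformAddGroup B] [IsTopologicalRing B] [T2Space B]
    (hA : HasLinearRingTopology A) (hB : HasLinearRingTopology B)
    (h : ℕ → A →+ B)
    (hpt : ∀ a : A, Tendsto (fun n => h n a) atTop (nhds 0)) :
    (∀ a : A, Tendsto (fun n => ((h n a : B) : Completion B)) atTop (nhds 0)) ∧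
      (∀ a a' : A,
        (UniformFun.ofFun fun n => ((h n (a + a') : B) : Completion B)) =
          (UniformFun.ofFun fun n => ((h n a : B) : Completion B)) +
            UniformFun.ofFun fun n => ((h n a' : B) : Completion B)) ∧
      (Continuous (fun a : A =>
          UniformFun.ofFun fun n => ((h n a : B) : Completion B)) ↔
        ((∀ n, Continuous (h n)) ∧
          ConvergesContinuouslyTo (fun n a => h n a) (fun _ => 0))) :=
  restricted_series_map_continuous_iff_general A B hA hB h hpt
end
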